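/- arXiv:2402.02019 — 5 statements merged into one kernel-verified Lean document; each statement's English description precedes it below -/
import Mathlib

section
/- Let f, g : ℝ^m × ℝ^n → ℝ with f continuously differentiable and g twice continuously differentiable. Suppose μ > 0 and for every x the map y ↦ g(x,y) is μ-strongly convex with unique minimizer y*(x), and the map y* : ℝ^m → ℝ^n is differentiable. Set Φ(x) := f(x, y*(x)). Then for every x, ∇Φ(x) = ∇_x f(x, y*(x)) − (∇²_{xy} g(x, y*(x)))* v*(x), where v*(x) ∈ ℝ^n is the unique solution of ∇²_{yy} g(x, y*(x)) v = ∇_y f(x, y*(x)), and (∇²_{xy} g)* : ℝ^n → ℝ^m denotes the adjoint of the cross-derivative ∇²_{xy} g(x,y). -/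
/-!
Differentiating the first-order condition `∇_y g(x, y*(x)) = 0` along `x` gives
`∇²_{yy} g · Dy* = -∇²_{xy} g`. By the chain rule, `∇Φ(x) = ∇_x f + (Dy*)* ∇_y f`, and
`∇_y f = ∇²_{yy} g v*`; since the Hessian `∇²_{yy} g` is self-adjoint (Schwarz),
`(Dy*)* ∇²_{yy} g v* = (∇²_{yy} g · Dy*)* v* = -(∇²_{xy} g)* v*`.
-/

/-- Partial gradient in the first (x) variable of a function on a product of
Euclidean spaces. -/
noncomputable def gradx {m n : ℕ}
    (f : EuclideanSpace ℝ (Fin m) × EuclideanSpace ℝ (Fin n) → ℝ)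
    (p : EuclideanSpace ℝ (Fin m) × EuclideanSpace ℝ (Fin n)) :
    EuclideanSpace ℝ (Fin m) :=
  gradient (fun x => f (x, p.2)) p.1

/-- Partial gradient in the second (y) variable. -/
noncomputable def grady {m n : ℕ}
    (f : EuclideanSpace ℝ (Fin m) × EuclideanSpace ℝ (Fin n) → ℝ)
    (p : EuclideanSpace ℝ (Fin m) × EuclideanSpace ℝ (Fin n)) :
    EuclideanSpace ℝ (Fin n) :=
  gradient (fun y => f (p.1, y)) p.2

/-- Cross second derivative ∇²_{xy} f(x,y) : ℝ^m →L ℝ^n, the derivative in x of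
the map x ↦ ∇_y f(x,y). -/
noncomputable def crossxy {m n : ℕ}
    (f : EuclideanSpace ℝ (Fin m) × EuclideanSpace ℝ (Fin n) → ℝ)
    (p : EuclideanSpace ℝ (Fin m) × EuclideanSpace ℝ (Fin n)) :
    EuclideanSpace ℝ (Fin m) →L[ℝ] EuclideanSpace ℝ (Fin n) :=
  fderiv ℝ (fun x => grady f (x, p.2)) p.1

/-- Hessian in y: ∇²_{yy} f(x,y) : ℝ^n →L ℝ^n, the derivative in y of the map
y ↦ ∇_y f(x,y). -/
noncomputable def hessyy {m n : ℕ}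
    (f : EuclideanSpace ℝ (Fin m) × EuclideanSpace ℝ (Fin n) → ℝ)
    (p : EuclideanSpace ℝ (Fin m) × EuclideanSpace ℝ (Fin n)) :
    EuclideanSpace ℝ (Fin n) →L[ℝ] EuclideanSpace ℝ (Fin n) :=
  fderiv ℝ (fun y => grady f (p.1, y)) p.2

open scoped RealInnerProductSpace

section PartialDerivatives

variable {𝕜 : Type*} [NontriviallyNormedField 𝕜] {E F G : Type*}
  [NormedAddCommGroup E] [NormedSpace 𝕜 E] [NormedAddCommGroup F] [NormedSpace 𝕜 F]
  [NormedAddCommGroup G] [NormedSpace 𝕜 G]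

theorem DifferentiableAt.fderiv_partial_fst {f : E × F → G} {p : E × F}
    (hf : DifferentiableAt 𝕜 f p) :
    fderiv 𝕜 (fun x => f (x, p.2)) p.1 = (fderiv 𝕜 f p).comp (.inl 𝕜 E F) :=
  (hf.hasFDerivAt.comp p.1 (hasFDerivAt_prodMk_left p.1 p.2)).fderiv

theorem DifferentiableAt.fderiv_partial_snd {f : E × F → G} {p : E × F}
    (hf : DifferentiableAt 𝕜 f p) :
    fderiv 𝕜 (fun y => f (p.1, y)) p.2 = (fderiv 𝕜 f p).comp (.inr 𝕜 E F) :=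
  (hf.hasFDerivAt.comp p.2 (hasFDerivAt_prodMk_right p.1 p.2)).fderiv

theorem fderiv_comp_graph_apply {f : E × F → G} {y : E → F} {x : E}
    (hf : DifferentiableAt 𝕜 f (x, y x)) (hy : DifferentiableAt 𝕜 y x) (u : E) :
    fderiv 𝕜 (fun x' => f (x', y x')) x u =
      fderiv 𝕜 (fun x' => f (x', y x)) x u +
        fderiv 𝕜 (fun y' => f (x, y')) (y x) (fderiv 𝕜 y x u) := by
  have hgraph : HasFDerivAt (fun x' => f (x', y x'))
      ((fderiv 𝕜 f (x, y x)).comp ((ContinuousLinearMap.id 𝕜 E).prod (fderiv 𝕜 y x))) x :=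
    hf.hasFDerivAt.comp x ((hasFDerivAt_id x).prodMk hy.hasFDerivAt)
  rw [hgraph.fderiv, hf.fderiv_partial_fst, hf.fderiv_partial_snd]
  simp [← map_add]

theorem fderiv_partial_snd_apply_fderiv_of_graph_zero {k : E × F → G} {y : E → F} {x : E}
    (hk : DifferentiableAt 𝕜 k (x, y x)) (hy : DifferentiableAt 𝕜 y x)
    (hzero : ∀ x', k (x', y x') = 0) (u : E) :
    fderiv 𝕜 (fun y' => k (x, y')) (y x) (fderiv 𝕜 y x u) =
      -fderiv 𝕜 (fun x' => k (x', y x)) x u := by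
  have hsplit := fderiv_comp_graph_apply hk hy u
  simp only [hzero, fderiv_const_apply, zero_apply] at hsplit
  exact eq_neg_of_add_eq_zero_right hsplit.symm

end PartialDerivatives

theorem inner_fderiv_gradient_comm {F : Type*} [NormedAddCommGroup F] [InnerProductSpace ℝ F]
    [CompleteSpace F] {h : F → ℝ} {y : F} (hh : ContDiffAt ℝ 2 h y) (v w : F) :
    ⟪fderiv ℝ (gradient h) y v, w⟫ = ⟪v, fderiv ℝ (gradient h) y w⟫ := by
  let toDualSymm : StrongDual ℝ F →L[ℝ] F :=
    (InnerProductSpace.toDual ℝ F).symm.toContinuousLinearEquiv.toContinuousLinearMap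
  have hdiff : DifferentiableAt ℝ (fderiv ℝ h) y :=
    (hh.fderiv_right (m := 1) (by norm_num)).differentiableAt one_ne_zero
  have hhess : fderiv ℝ (gradient h) y = toDualSymm.comp (fderiv ℝ (fderiv ℝ h) y) :=
    (toDualSymm.hasFDerivAt.comp y hdiff.hasFDerivAt).fderiv
  rw [hhess, real_inner_comm _ v]
  simp only [ContinuousLinearMap.comp_apply, toDualSymm, ContinuousLinearEquiv.coe_coe, LinearIsometryEquiv.coe_toContinuousLinearEquiv,
    InnerProductSpace.toDual_symm_apply]
  exact hh.isSymmSndFDerivAt (by simp) v w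

section Euclidean

variable {m n : ℕ}

theorem ContDiff.differentiable_grady
    {g : EuclideanSpace ℝ (Fin m) × EuclideanSpace ℝ (Fin n) → ℝ} (hg : ContDiff ℝ 2 g) :
    Differentiable ℝ (grady g) := by
  have hgrady : grady g = fun q =>
      (InnerProductSpace.toDual ℝ _).symm ((fderiv ℝ g q).comp (.inr ℝ _ _)) :=
    funext fun q => by
      rw [grady, gradient, ((hg.differentiable two_ne_zero) q).fderiv_partial_snd]
  have hdg : Differentiable ℝ (fderiv ℝ g) :=
    (hg.fderiv_right (m := 1) (by norm_num)).differentiable one_ne_zero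
  rw [hgrady]
  exact (InnerProductSpace.toDual ℝ _).symm.toContinuousLinearEquiv.differentiable.comp
    (hdg.clm_comp (differentiable_const _))

theorem grady_eq_zero_of_forall_le
    {g : EuclideanSpace ℝ (Fin m) × EuclideanSpace ℝ (Fin n) → ℝ}
    {x : EuclideanSpace ℝ (Fin m)} {y₀ : EuclideanSpace ℝ (Fin n)}
    (hmin : ∀ y, g (x, y₀) ≤ g (x, y)) : grady g (x, y₀) = 0 := by
  have hloc : IsLocalMin (fun y => g (x, y)) y₀ := Filter.Eventually.of_forall hmin
  simp [grady, gradient, hloc.fderiv_eq_zero]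

theorem ContDiff.inner_hessyy_comm
    {g : EuclideanSpace ℝ (Fin m) × EuclideanSpace ℝ (Fin n) → ℝ} (hg : ContDiff ℝ 2 g)
    (p : EuclideanSpace ℝ (Fin m) × EuclideanSpace ℝ (Fin n)) (v w : EuclideanSpace ℝ (Fin n)) :
    ⟪hessyy g p v, w⟫ = ⟪v, hessyy g p w⟫ :=
  inner_fderiv_gradient_comm (hg.comp (contDiff_const.prodMk contDiff_id)).contDiffAt v w

theorem hessyy_apply_fderiv_eq_neg_crossxy
    {g : EuclideanSpace ℝ (Fin m) × EuclideanSpace ℝ (Fin n) → ℝ} (hg : ContDiff ℝ 2 g)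
    {ystar : EuclideanSpace ℝ (Fin m) → EuclideanSpace ℝ (Fin n)}
    (hmin : ∀ x y, g (x, ystar x) ≤ g (x, y)) {x : EuclideanSpace ℝ (Fin m)}
    (hy : DifferentiableAt ℝ ystar x) (u : EuclideanSpace ℝ (Fin m)) :
    hessyy g (x, ystar x) (fderiv ℝ ystar x u) = -crossxy g (x, ystar x) u :=
  fderiv_partial_snd_apply_fderiv_of_graph_zero (hg.differentiable_grady _) hy
    (fun x' => grady_eq_zero_of_forall_le (hmin x')) u

end Euclidean

theorem statement_0_general {m n : ℕ}
    (f g : EuclideanSpace ℝ (Fin m) × EuclideanSpace ℝ (Fin n) → ℝ)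
    (hf : ContDiff ℝ 1 f) (hg : ContDiff ℝ 2 g)
    (ystar : EuclideanSpace ℝ (Fin m) → EuclideanSpace ℝ (Fin n))
    -- y*(x) is the unique minimizer of y ↦ g(x,y)
    (hmin : ∀ x y, g (x, ystar x) ≤ g (x, y))
    (hystar : Differentiable ℝ ystar)
    (Φ : EuclideanSpace ℝ (Fin m) → ℝ)
    (hΦ : ∀ x, Φ x = f (x, ystar x))
    -- v*(x) is the (unique) solution of ∇²_{yy} g(x,y*(x)) v = ∇_y f(x,y*(x))
    (vstar : EuclideanSpace ℝ (Fin m) → EuclideanSpace ℝ (Fin n))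
    (hv : ∀ x, hessyy g (x, ystar x) (vstar x) = grady f (x, ystar x)) :
    ∀ x, gradient Φ x =
      gradx f (x, ystar x) -
        (ContinuousLinearMap.adjoint (crossxy g (x, ystar x))) (vstar x) := by
  intro x
  have hfx : DifferentiableAt ℝ f (x, ystar x) := hf.differentiable one_ne_zero _
  have hΦ' : Φ = fun x' => f (x', ystar x') := funext hΦ
  refine ext_inner_right ℝ fun u => ?_
  have hpartial_snd : fderiv ℝ (fun y => f (x, y)) (ystar x) (fderiv ℝ ystar x u) =
      -⟪ContinuousLinearMap.adjoint (crossxy g (x, ystar x)) (vstar x), u⟫ :=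
    calc fderiv ℝ (fun y => f (x, y)) (ystar x) (fderiv ℝ ystar x u)
        _ = ⟪grady f (x, ystar x), fderiv ℝ ystar x u⟫ := (inner_gradient_left ..).symm
        _ = ⟪vstar x, hessyy g (x, ystar x) (fderiv ℝ ystar x u)⟫ := by
          rw [← hv, hg.inner_hessyy_comm]
        _ = -⟪ContinuousLinearMap.adjoint (crossxy g (x, ystar x)) (vstar x), u⟫ := by
          rw [hessyy_apply_fderiv_eq_neg_crossxy hg hmin (hystar x), inner_neg_right,
            ContinuousLinearMap.adjoint_inner_left]
  rw [inner_gradient_left, hΦ', fderiv_comp_graph_apply hfx (hystar x), hpartial_snd,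
    inner_sub_left, gradx, inner_gradient_left, sub_eq_add_neg]

/-- hypergradient formula
∇Φ(x) = ∇_x f(x,y*(x)) − (∇²_{xy} g(x,y*(x)))* v*(x), where v*(x) solves
∇²_{yy} g(x,y*(x)) v = ∇_y f(x,y*(x)). -/
theorem statement_0 {m n : ℕ}
    (f g : EuclideanSpace ℝ (Fin m) × EuclideanSpace ℝ (Fin n) → ℝ)
    (μ : ℝ) (hμ : 0 < μ)
    (hf : ContDiff ℝ 1 f) (hg : ContDiff ℝ 2 g)
    (ystar : EuclideanSpace ℝ (Fin m) → EuclideanSpace ℝ (Fin n))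
    -- μ-strong convexity of y ↦ g(x,y): g(x,·) − (μ/2)‖·‖² is convex
    (hsc : ∀ x, ConvexOn ℝ Set.univ (fun y => g (x, y) - μ / 2 * ‖y‖ ^ 2))
    -- y*(x) is the unique minimizer of y ↦ g(x,y)
    (hmin : ∀ x y, g (x, ystar x) ≤ g (x, y))
    (huniq : ∀ x y, (∀ z, g (x, y) ≤ g (x, z)) → y = ystar x)
    (hystar : Differentiable ℝ ystar)
    (Φ : EuclideanSpace ℝ (Fin m) → ℝ)
    (hΦ : ∀ x, Φ x = f (x, ystar x))
    -- v*(x) is the (unique) solution of ∇²_{yy} g(x,y*(x)) v = ∇_y f(x,y*(x))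
    (vstar : EuclideanSpace ℝ (Fin m) → EuclideanSpace ℝ (Fin n))
    (hv : ∀ x, hessyy g (x, ystar x) (vstar x) = grady f (x, ystar x)) :
    ∀ x, gradient Φ x =
      gradx f (x, ystar x) -
        (ContinuousLinearMap.adjoint (crossxy g (x, ystar x))) (vstar x) :=
  statement_0_general f g hf hg ystar hmin hystar Φ hΦ vstar hv
end

section
/- Let g : ℝ^m × ℝ^n → ℝ be differentiable, μ > 0, ℓ_{g,1} > 0. Suppose for every x the map y ↦ g(x,y) is μ-strongly convex with unique minimizer y*(x), and the full gradient ∇g : ℝ^m × ℝ^n → ℝ^m × ℝ^n is ℓ_{g,1}-Lipschitz. Then the solution map y* : ℝ^m → ℝ^n is κ-Lipschitz with κ = ℓ_{g,1}/μ: for all x, x', ‖y*(x) − y*(x')‖ ≤ (ℓ_{g,1}/μ)‖x − x'‖. -/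
open Set InnerProductSpace
open scoped Gradient RealInnerProductSpace

theorem ConvexOn.fderiv_apply_sub_le {E : Type*} [NormedAddCommGroup E] [NormedSpace ℝ E]
    {f : E → ℝ} (hc : ConvexOn ℝ univ f) {b : E} (hd : DifferentiableAt ℝ f b) (a : E) :
    fderiv ℝ f b (a - b) ≤ f a - f b := by
  have hline : ConvexOn ℝ univ (f ∘ (AffineMap.lineMap b a : ℝ →ᵃ[ℝ] E)) := by
    simpa using hc.comp_affineMap (AffineMap.lineMap b a : ℝ →ᵃ[ℝ] E)
  have hderiv : HasDerivAt (f ∘ (AffineMap.lineMap b a : ℝ →ᵃ[ℝ] E)) (fderiv ℝ f b (a - b)) 0 := by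
    refine HasFDerivAt.comp_hasDerivAt (0 : ℝ) ?_ AffineMap.hasDerivAt_lineMap
    simpa using hd.hasFDerivAt
  simpa [slope_def_field] using
    hline.le_slope_of_hasDerivAt (mem_univ 0) (mem_univ 1) one_pos hderiv

theorem fderiv_eq_zero_of_forall_le {E : Type*} [NormedAddCommGroup E] [NormedSpace ℝ E]
    {f : E → ℝ} {a : E} (hmin : ∀ y, f a ≤ f y) : fderiv ℝ f a = 0 :=
  IsLocalMin.fderiv_eq_zero (Filter.Eventually.of_forall hmin)

section StrongConvexity

variable {E : Type*} [NormedAddCommGroup E] [InnerProductSpace ℝ E] {f : E → ℝ} {μ : ℝ}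

theorem StrongConvexOn.fderiv_apply_sub_add_le (hf : StrongConvexOn univ μ f) {b : E}
    (hd : DifferentiableAt ℝ f b) (a : E) :
    fderiv ℝ f b (a - b) + μ / 2 * ‖a - b‖ ^ 2 ≤ f a - f b := by
  have hderiv : HasFDerivAt (fun z => f z - μ / 2 * ‖z‖ ^ 2)
      (fderiv ℝ f b - (μ / 2) • (2 • innerSL ℝ b)) b :=
    hd.hasFDerivAt.sub ((hasStrictFDerivAt_norm_sq b).hasFDerivAt.const_mul (μ / 2))
  have hfo := (strongConvexOn_iff_convex.1 hf).fderiv_apply_sub_le hderiv.differentiableAt a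
  rw [hderiv.fderiv] at hfo
  simp only [sub_apply, smul_apply, innerSL_apply_apply, smul_eq_mul, nsmul_eq_mul] at hfo
  have hsq : ‖a - b‖ ^ 2 = ‖a‖ ^ 2 - ‖b‖ ^ 2 - 2 * ⟪b, a - b⟫ := by
    rw [norm_sub_sq_real, inner_sub_right, real_inner_self_eq_norm_sq, real_inner_comm]
    ring
  rw [hsq]
  linarith

theorem StrongConvexOn.mul_norm_sub_le_norm_gradient [CompleteSpace E]
    (hf : StrongConvexOn univ μ f) {a b : E} (hmin : ∀ y, f a ≤ f y)
    (hda : DifferentiableAt ℝ f a) (hdb : DifferentiableAt ℝ f b) :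
    μ * ‖a - b‖ ≤ ‖∇ f b‖ := by
  have hab := hf.fderiv_apply_sub_add_le hdb a
  have hba := hf.fderiv_apply_sub_add_le hda b
  rw [fderiv_eq_zero_of_forall_le hmin, zero_apply, norm_sub_rev] at hba
  rw [← inner_gradient_left] at hab
  have hmono : μ * ‖a - b‖ ^ 2 ≤ ‖∇ f b‖ * ‖a - b‖ := by
    have := neg_le_of_abs_le (abs_real_inner_le_norm (∇ f b) (a - b))
    linarith
  rcases (norm_nonneg (a - b)).eq_or_lt with hzero | hpos
  · rw [← hzero, mul_zero]
    exact norm_nonneg _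
  · exact le_of_mul_le_mul_right (by nlinarith) hpos

end StrongConvexity

theorem statement_2_general {m n : ℕ}
    (g : EuclideanSpace ℝ (Fin m) × EuclideanSpace ℝ (Fin n) → ℝ)
    (μ ℓg1 : ℝ) (hμ : 0 < μ)
    (hg : Differentiable ℝ g)
    (ystar : EuclideanSpace ℝ (Fin m) → EuclideanSpace ℝ (Fin n))
    -- μ-strong convexity of y ↦ g(x,y): g(x,·) − (μ/2)‖·‖² is convex
    (hsc : ∀ x, ConvexOn ℝ Set.univ (fun y => g (x, y) - μ / 2 * ‖y‖ ^ 2))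
    -- y*(x) is the unique minimizer of y ↦ g(x,y)
    (hmin : ∀ x y, g (x, ystar x) ≤ g (x, y))
    -- ∇g is ℓ_{g,1}-Lipschitz in the joint variable
    (hglip : ∀ p q : EuclideanSpace ℝ (Fin m) × EuclideanSpace ℝ (Fin n),
      Real.sqrt (‖gradx g p - gradx g q‖ ^ 2 + ‖grady g p - grady g q‖ ^ 2)
        ≤ ℓg1 * Real.sqrt (‖p.1 - q.1‖ ^ 2 + ‖p.2 - q.2‖ ^ 2)) :
    ∀ x x', ‖ystar x - ystar x'‖ ≤ (ℓg1 / μ) * ‖x - x'‖ := by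
  intro x x'
  set b := ystar x'
  have hdiff : Differentiable ℝ fun y => g (x, y) := hg.comp (by fun_prop)
  have hcrit : grady g (x', b) = 0 := by
    rw [grady, gradient, fderiv_eq_zero_of_forall_le (f := fun y => g (x', y)) (hmin x'), map_zero]
  have hlip : ‖grady g (x, b) - grady g (x', b)‖ ≤ ℓg1 * ‖x - x'‖ := by
    calc _ ≤ √(‖gradx g (x, b) - gradx g (x', b)‖ ^ 2 + ‖grady g (x, b) - grady g (x', b)‖ ^ 2) :=
          Real.le_sqrt_of_sq_le (le_add_of_nonneg_left (sq_nonneg _))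
      _ ≤ ℓg1 * √(‖x - x'‖ ^ 2) := by simpa using hglip (x, b) (x', b)
      _ = ℓg1 * ‖x - x'‖ := by rw [Real.sqrt_sq (norm_nonneg _)]
  rw [div_mul_eq_mul_div, le_div_iff₀ hμ, mul_comm]
  calc μ * ‖ystar x - b‖ ≤ ‖grady g (x, b)‖ :=
        (strongConvexOn_iff_convex.2 (hsc x)).mul_norm_sub_le_norm_gradient (hmin x)
          (hdiff _) (hdiff _)
    _ = ‖grady g (x, b) - grady g (x', b)‖ := by rw [hcrit, sub_zero]
    _ ≤ ℓg1 * ‖x - x'‖ := hlip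

/-- the solution map y* is (ℓ_{g,1}/μ)-Lipschitz.
The full gradient ∇g(x,y) = (∇_x g, ∇_y g) is Lipschitz with respect to the
product norm ‖(u,v)‖ = √(‖u‖² + ‖v‖²). -/
theorem statement_2 {m n : ℕ}
    (g : EuclideanSpace ℝ (Fin m) × EuclideanSpace ℝ (Fin n) → ℝ)
    (μ ℓg1 : ℝ) (hμ : 0 < μ) (hℓg1 : 0 < ℓg1)
    (hg : Differentiable ℝ g)
    (ystar : EuclideanSpace ℝ (Fin m) → EuclideanSpace ℝ (Fin n))
    -- μ-strong convexity of y ↦ g(x,y): g(x,·) − (μ/2)‖·‖² is convex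
    (hsc : ∀ x, ConvexOn ℝ Set.univ (fun y => g (x, y) - μ / 2 * ‖y‖ ^ 2))
    -- y*(x) is the unique minimizer of y ↦ g(x,y)
    (hmin : ∀ x y, g (x, ystar x) ≤ g (x, y))
    (huniq : ∀ x y, (∀ z, g (x, y) ≤ g (x, z)) → y = ystar x)
    -- ∇g is ℓ_{g,1}-Lipschitz in the joint variable
    (hglip : ∀ p q : EuclideanSpace ℝ (Fin m) × EuclideanSpace ℝ (Fin n),
      Real.sqrt (‖gradx g p - gradx g q‖ ^ 2 + ‖grady g p - grady g q‖ ^ 2)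
        ≤ ℓg1 * Real.sqrt (‖p.1 - q.1‖ ^ 2 + ‖p.2 - q.2‖ ^ 2)) :
    ∀ x x', ‖ystar x - ystar x'‖ ≤ (ℓg1 / μ) * ‖x - x'‖ :=
  statement_2_general g μ ℓg1 hμ hg ystar hsc hmin hglip
end

section
/- In the Euclidean bilevel setting below, for every x ∈ ℝ^m, y ∈ ℝ^n and v ∈ ℝ^n, the hypergradient estimate h := ∇_x f(x,y) − (∇²_{xy} g(x,y))* v satisfies ‖h − ∇Φ(x)‖ ≤ ( ℓ_{f,1} + ℓ_{f,0} ℓ_{g,2}/μ ) ‖y − y*(x)‖ + ℓ_{g,1} ‖v − v*(x)‖, where v*(x) := (∇²_{yy} g(x, y*(x)))⁻¹ ∇_y f(x, y*(x)) and ∇Φ(x) = ∇_x f(x, y*(x)) − (∇²_{xy} g(x, y*(x)))* v*(x). -/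
/-!
Write `A = ∇²_{xy} g(x, y)` and `A₀ = ∇²_{xy} g(x, y*(x))`. The error splits as
`(∇ₓf(x, y) - ∇ₓf(x, y*)) - A* (v - v*) - (A - A₀)* v*`, and the three terms are controlled by the
Lipschitz constants of `∇f`, `∇g` and `∇²_{xy} g`. What remains is `‖v*‖ ≤ ℓ_{f,0} / μ`:
strong convexity makes the Hessian `∇²_{yy} g` coercive with constant `μ` (the gradient of a convex
function is monotone, so its derivative is positive semidefinite), hence its inverse has norm at
most `1 / μ`, while `‖∇_y f‖ ≤ ℓ_{f,0}` because `f` is `ℓ_{f,0}`-Lipschitz.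
-/

open Set InnerProductSpace Filter

section Convexity

variable {E : Type*} [NormedAddCommGroup E] [InnerProductSpace ℝ E] [CompleteSpace E]

theorem ConvexOn.inner_gradient_sub_le {φ : E → ℝ} {a : E} {G : E} (b : E)
    (hφ : ConvexOn ℝ univ φ) (hG : HasGradientAt φ G a) :
    ⟪G, b - a⟫_ℝ ≤ φ b - φ a := by
  let ℓ : ℝ →ᵃ[ℝ] E := AffineMap.lineMap a b
  have hline : HasDerivAt (φ ∘ ℓ) ⟪G, b - a⟫_ℝ 0 := by
    have h : HasFDerivAt φ (toDual ℝ E G) (ℓ 0) := by simpa [ℓ] using hG.hasFDerivAt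
    exact h.comp_hasDerivAt 0 AffineMap.hasDerivAt_lineMap
  have := (hφ.comp_affineMap ℓ).le_slope_of_hasDerivAt (mem_univ 0) (mem_univ 1) one_pos hline
  simpa [ℓ, slope_def_field] using this

theorem ConvexOn.inner_gradient_sub_gradient_nonneg {φ : E → ℝ} {a b G₁ G₂ : E}
    (hφ : ConvexOn ℝ univ φ) (ha : HasGradientAt φ G₁ a) (hb : HasGradientAt φ G₂ b) :
    0 ≤ ⟪G₂ - G₁, b - a⟫_ℝ := by
  have h₁ := hφ.inner_gradient_sub_le b ha
  have h₂ := hφ.inner_gradient_sub_le a hb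
  rw [← neg_sub b a, inner_neg_right] at h₂
  rw [inner_sub_left]
  linarith

theorem ConvexOn.inner_fderiv_gradient_apply_self_nonneg {φ : E → ℝ} {G : E → E}
    {H : E →L[ℝ] E} {a : E} (hφ : ConvexOn ℝ univ φ) (hG : ∀ y, HasGradientAt φ (G y) y)
    (hH : HasFDerivAt G H a) (v : E) :
    0 ≤ ⟪H v, v⟫_ℝ := by
  have hderiv : HasDerivAt (fun t : ℝ => ⟪G (a + t • v), v⟫_ℝ) ⟪H v, v⟫_ℝ 0 := by
    have hline : HasDerivAt (fun t : ℝ => a + t • v) v 0 := by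
      simpa using ((hasDerivAt_id (0 : ℝ)).smul_const v).const_add a
    have hH' : HasFDerivAt G H (a + (0 : ℝ) • v) := by simpa using hH
    simpa using (hH'.comp_hasDerivAt 0 hline).inner ℝ (hasDerivAt_const 0 v)
  refine hderiv.nonneg_of_monotone fun s t hst => ?_
  have := hφ.inner_gradient_sub_gradient_nonneg (hG (a + s • v)) (hG (a + t • v))
  rw [show a + t • v - (a + s • v) = (t - s) • v by module, inner_smul_right,
    inner_sub_left] at this
  rcases hst.eq_or_lt with rfl | hlt
  · rfl
  · exact sub_nonneg.mp ((mul_nonneg_iff_of_pos_left (sub_pos.2 hlt)).1 this)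

theorem hasGradientAt_half_mul_norm_sq (μ : ℝ) (y : E) :
    HasGradientAt (fun y : E => μ / 2 * ‖y‖ ^ 2) (μ • y) y := by
  rw [hasGradientAt_iff_hasFDerivAt]
  refine ((hasStrictFDerivAt_norm_sq y).hasFDerivAt.const_mul (μ / 2)).congr_fderiv ?_
  ext w
  simp only [smul_apply, coe_innerSL_apply, nsmul_eq_mul, Nat.cast_ofNat, smul_eq_mul, map_smul,
    toDual_apply_apply]
  ring

theorem ConvexOn.mul_norm_sq_le_inner_fderiv_gradient_apply_self {c : E → ℝ} {G : E → E}
    {H : E →L[ℝ] E} {a : E} {μ : ℝ} (hc : ConvexOn ℝ univ fun y => c y - μ / 2 * ‖y‖ ^ 2)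
    (hG : ∀ y, HasGradientAt c (G y) y) (hH : HasFDerivAt G H a) (v : E) :
    μ * ‖v‖ ^ 2 ≤ ⟪H v, v⟫_ℝ := by
  have := hc.inner_fderiv_gradient_apply_self_nonneg
    (fun y => hasGradientAt_iff_hasFDerivAt.2 <| by
      simpa [map_sub] using
        (hG y).hasFDerivAt.fun_sub (hasGradientAt_half_mul_norm_sq μ y).hasFDerivAt)
    (hH.sub ((hasFDerivAt_id a).const_smul μ)) v
  simpa [inner_sub_left, real_inner_smul_left, real_inner_self_eq_norm_sq] using this

end Convexity

section Coercive

variable {E : Type*} [NormedAddCommGroup E] [InnerProductSpace ℝ E]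

theorem mul_norm_le_norm_apply_of_coercive {H : E →L[ℝ] E} {μ : ℝ}
    (hH : ∀ v, μ * ‖v‖ ^ 2 ≤ ⟪H v, v⟫_ℝ) (v : E) : μ * ‖v‖ ≤ ‖H v‖ := by
  rcases eq_or_ne v 0 with rfl | hv
  · simp
  have hv' : 0 < ‖v‖ := norm_pos_iff.mpr hv
  have : μ * ‖v‖ * ‖v‖ ≤ ‖H v‖ * ‖v‖ := by
    nlinarith [hH v, real_inner_le_norm (H v) v]
  exact le_of_mul_le_mul_right this hv'

theorem norm_inverse_apply_le_of_coercive [CompleteSpace E] {H : E →L[ℝ] E} {μ : ℝ}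
    (hμ : 0 < μ) (hH : ∀ v, μ * ‖v‖ ^ 2 ≤ ⟪H v, v⟫_ℝ) (w : E) : ‖H.inverse w‖ ≤ ‖w‖ / μ := by
  by_cases hinv : H.IsInvertible
  · rw [le_div_iff₀ hμ, mul_comm]
    simpa [hinv.self_apply_inverse] using mul_norm_le_norm_apply_of_coercive hH (H.inverse w)
  · -- `ContinuousLinearMap.inverse` is `0` on non-invertible maps
    rw [ContinuousLinearMap.inverse_of_not_isInvertible hinv]
    simp only [zero_apply, norm_zero]
    positivity

end Coercive

theorem norm_sub_adjoint_apply_sub_le {E F : Type*} [NormedAddCommGroup E] [InnerProductSpace ℝ E]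
    [CompleteSpace E] [NormedAddCommGroup F] [InnerProductSpace ℝ F] [CompleteSpace F]
    (a a₀ : E) (A A₀ : E →L[ℝ] F) (v v₀ : F) :
    ‖(a - A.adjoint v) - (a₀ - A₀.adjoint v₀)‖
      ≤ ‖a - a₀‖ + ‖A‖ * ‖v - v₀‖ + ‖A - A₀‖ * ‖v₀‖ := by
  have hsplit : (a - A.adjoint v) - (a₀ - A₀.adjoint v₀)
      = (a - a₀) - A.adjoint (v - v₀) - (A - A₀).adjoint v₀ := by
    simp only [map_sub, sub_apply]
    abel
  rw [hsplit]
  calc _ ≤ ‖a - a₀‖ + ‖A.adjoint (v - v₀)‖ + ‖(A - A₀).adjoint v₀‖ :=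
        (norm_sub_le _ _).trans (add_le_add_left (norm_sub_le _ _) _)
    _ ≤ ‖a - a₀‖ + ‖A‖ * ‖v - v₀‖ + ‖A - A₀‖ * ‖v₀‖ := by
        rw [← ContinuousLinearMap.adjoint.norm_map A,
          ← ContinuousLinearMap.adjoint.norm_map (A - A₀)]
        gcongr <;> exact ContinuousLinearMap.le_opNorm _ _

theorem le_sqrt_sq_add_sq_left {a : ℝ} (b : ℝ) (ha : 0 ≤ a) : a ≤ √(a ^ 2 + b ^ 2) :=
  (Real.le_sqrt ha (by positivity)).2 (le_add_of_nonneg_right (sq_nonneg b))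

theorem le_sqrt_sq_add_sq_right (a : ℝ) {b : ℝ} (hb : 0 ≤ b) : b ≤ √(a ^ 2 + b ^ 2) :=
  (Real.le_sqrt hb (by positivity)).2 (le_add_of_nonneg_left (sq_nonneg a))

section PartialDerivatives

variable {m n : ℕ}

theorem norm_grady_le_of_lipschitz {f : EuclideanSpace ℝ (Fin m) × EuclideanSpace ℝ (Fin n) → ℝ}
    {ℓ : ℝ} (hℓ : 0 ≤ ℓ)
    (hf : ∀ p q : EuclideanSpace ℝ (Fin m) × EuclideanSpace ℝ (Fin n),
      |f p - f q| ≤ ℓ * √(‖p.1 - q.1‖ ^ 2 + ‖p.2 - q.2‖ ^ 2))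
    (p : EuclideanSpace ℝ (Fin m) × EuclideanSpace ℝ (Fin n)) : ‖grady f p‖ ≤ ℓ := by
  rw [grady, gradient, LinearIsometryEquiv.norm_map]
  refine norm_fderiv_le_of_lip' ℝ hℓ (Eventually.of_forall fun y => ?_)
  simpa [Real.sqrt_sq_eq_abs] using hf (p.1, y) (p.1, p.2)

theorem norm_gradx_sub_le_of_lipschitz
    {f : EuclideanSpace ℝ (Fin m) × EuclideanSpace ℝ (Fin n) → ℝ} {ℓ : ℝ}
    (hf : ∀ p q : EuclideanSpace ℝ (Fin m) × EuclideanSpace ℝ (Fin n),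
      √(‖gradx f p - gradx f q‖ ^ 2 + ‖grady f p - grady f q‖ ^ 2)
        ≤ ℓ * √(‖p.1 - q.1‖ ^ 2 + ‖p.2 - q.2‖ ^ 2))
    (x : EuclideanSpace ℝ (Fin m)) (y y' : EuclideanSpace ℝ (Fin n)) :
    ‖gradx f (x, y) - gradx f (x, y')‖ ≤ ℓ * ‖y - y'‖ :=
  (le_sqrt_sq_add_sq_left _ (norm_nonneg _)).trans
    (by simpa [Real.sqrt_sq_eq_abs] using hf (x, y) (x, y'))

theorem norm_crossxy_le_of_lipschitz
    {g : EuclideanSpace ℝ (Fin m) × EuclideanSpace ℝ (Fin n) → ℝ} {ℓ : ℝ} (hℓ : 0 ≤ ℓ)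
    (hg : ∀ p q : EuclideanSpace ℝ (Fin m) × EuclideanSpace ℝ (Fin n),
      √(‖gradx g p - gradx g q‖ ^ 2 + ‖grady g p - grady g q‖ ^ 2)
        ≤ ℓ * √(‖p.1 - q.1‖ ^ 2 + ‖p.2 - q.2‖ ^ 2))
    (p : EuclideanSpace ℝ (Fin m) × EuclideanSpace ℝ (Fin n)) : ‖crossxy g p‖ ≤ ℓ :=
  norm_fderiv_le_of_lip' ℝ hℓ <| Eventually.of_forall fun x =>
    (le_sqrt_sq_add_sq_right _ (norm_nonneg _)).trans
      (by simpa [Real.sqrt_sq_eq_abs] using hg (x, p.2) (p.1, p.2))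

theorem mul_norm_sq_le_inner_hessyy_apply_self
    {g : EuclideanSpace ℝ (Fin m) × EuclideanSpace ℝ (Fin n) → ℝ} {μ : ℝ} (hg : ContDiff ℝ 2 g)
    (p : EuclideanSpace ℝ (Fin m) × EuclideanSpace ℝ (Fin n))
    (hsc : ConvexOn ℝ univ fun y => g (p.1, y) - μ / 2 * ‖y‖ ^ 2)
    (w : EuclideanSpace ℝ (Fin n)) : μ * ‖w‖ ^ 2 ≤ ⟪hessyy g p w, w⟫_ℝ := by
  set c : EuclideanSpace ℝ (Fin n) → ℝ := fun y => g (p.1, y)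
  have hc : ContDiff ℝ 2 c := hg.comp (contDiff_const.prodMk contDiff_id)
  have hgrad : Differentiable ℝ (gradient c) :=
    ((toDual ℝ _).symm.contDiff.comp (hc.fderiv_right (m := 1) le_rfl)).differentiable one_ne_zero
  exact hsc.mul_norm_sq_le_inner_fderiv_gradient_apply_self
    (fun y => (hc.differentiable two_ne_zero y).hasGradientAt) (hgrad p.2).hasFDerivAt w

end PartialDerivatives

theorem statement_8_general {m n : ℕ}
    (f g : EuclideanSpace ℝ (Fin m) × EuclideanSpace ℝ (Fin n) → ℝ)
    (μ ℓf0 ℓf1 ℓg1 ℓg2 : ℝ)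
    (hμ : 0 < μ) (hℓf0 : 0 < ℓf0) (hℓg1 : 0 < ℓg1)
    (hg : ContDiff ℝ 2 g)
    (ystar : EuclideanSpace ℝ (Fin m) → EuclideanSpace ℝ (Fin n))
    -- μ-strong convexity of y ↦ g(x,y)
    (hsc : ∀ x, ConvexOn ℝ Set.univ (fun y => g (x, y) - μ / 2 * ‖y‖ ^ 2))
    (Φ : EuclideanSpace ℝ (Fin m) → ℝ)
    -- f is ℓ_{f,0}-Lipschitz in the joint variable
    (hflip : ∀ p q : EuclideanSpace ℝ (Fin m) × EuclideanSpace ℝ (Fin n),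
      |f p - f q| ≤ ℓf0 * Real.sqrt (‖p.1 - q.1‖ ^ 2 + ‖p.2 - q.2‖ ^ 2))
    -- ∇f is ℓ_{f,1}-Lipschitz in the joint variable
    (hgradflip : ∀ p q : EuclideanSpace ℝ (Fin m) × EuclideanSpace ℝ (Fin n),
      Real.sqrt (‖gradx f p - gradx f q‖ ^ 2 + ‖grady f p - grady f q‖ ^ 2)
        ≤ ℓf1 * Real.sqrt (‖p.1 - q.1‖ ^ 2 + ‖p.2 - q.2‖ ^ 2))
    -- ∇g is ℓ_{g,1}-Lipschitz in the joint variable (so ‖∇²_{xy} g‖_op ≤ ℓ_{g,1})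
    (hglip : ∀ p q : EuclideanSpace ℝ (Fin m) × EuclideanSpace ℝ (Fin n),
      Real.sqrt (‖gradx g p - gradx g q‖ ^ 2 + ‖grady g p - grady g q‖ ^ 2)
        ≤ ℓg1 * Real.sqrt (‖p.1 - q.1‖ ^ 2 + ‖p.2 - q.2‖ ^ 2))
    -- ∇²_{xy} g is ℓ_{g,2}-Lipschitz in operator norm
    (hcrosslip : ∀ p q : EuclideanSpace ℝ (Fin m) × EuclideanSpace ℝ (Fin n),
      ‖crossxy g p - crossxy g q‖
        ≤ ℓg2 * Real.sqrt (‖p.1 - q.1‖ ^ 2 + ‖p.2 - q.2‖ ^ 2))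
    -- v*(x) = (∇²_{yy} g(x,y*(x)))⁻¹ ∇_y f(x,y*(x))
    (vstar : EuclideanSpace ℝ (Fin m) → EuclideanSpace ℝ (Fin n))
    (hvstar : ∀ x, vstar x = (hessyy g (x, ystar x)).inverse (grady f (x, ystar x)))
    -- hypergradient formula
    (hgradΦ : ∀ x, gradient Φ x = gradx f (x, ystar x) -
      (ContinuousLinearMap.adjoint (crossxy g (x, ystar x))) (vstar x)) :
    ∀ (x : EuclideanSpace ℝ (Fin m)) (y v : EuclideanSpace ℝ (Fin n)),
      ‖(gradx f (x, y) - (ContinuousLinearMap.adjoint (crossxy g (x, y))) v)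
          - gradient Φ x‖
        ≤ (ℓf1 + ℓf0 * ℓg2 / μ) * ‖y - ystar x‖ + ℓg1 * ‖v - vstar x‖ := by
  intro x y v
  have hvstar_le : ‖vstar x‖ ≤ ℓf0 / μ := by
    rw [hvstar x]
    refine (norm_inverse_apply_le_of_coercive hμ
      (mul_norm_sq_le_inner_hessyy_apply_self hg (x, ystar x) (hsc x)) _).trans ?_
    gcongr
    exact norm_grady_le_of_lipschitz hℓf0.le hflip _
  have hcross : ‖crossxy g (x, y) - crossxy g (x, ystar x)‖ ≤ ℓg2 * ‖y - ystar x‖ := by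
    simpa [Real.sqrt_sq_eq_abs] using hcrosslip (x, y) (x, ystar x)
  rw [hgradΦ x]
  calc _ ≤ ‖gradx f (x, y) - gradx f (x, ystar x)‖ + ‖crossxy g (x, y)‖ * ‖v - vstar x‖
        + ‖crossxy g (x, y) - crossxy g (x, ystar x)‖ * ‖vstar x‖ :=
        norm_sub_adjoint_apply_sub_le _ _ _ _ _ _
    _ ≤ ℓf1 * ‖y - ystar x‖ + ℓg1 * ‖v - vstar x‖ + ℓg2 * ‖y - ystar x‖ * (ℓf0 / μ) := by
        gcongr
        · exact norm_gradx_sub_le_of_lipschitz hgradflip x y (ystar x)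
        · exact norm_crossxy_le_of_lipschitz hℓg1.le hglip _
        · exact (norm_nonneg _).trans hcross
    _ = (ℓf1 + ℓf0 * ℓg2 / μ) * ‖y - ystar x‖ + ℓg1 * ‖v - vstar x‖ := by ring

/-- hypergradient-estimate error bound
‖(∇_x f(x,y) − (∇²_{xy} g(x,y))* v) − ∇Φ(x)‖
  ≤ (ℓ_{f,1} + ℓ_{f,0}ℓ_{g,2}/μ)‖y − y*(x)‖ + ℓ_{g,1}‖v − v*(x)‖. -/
theorem statement_8 {m n : ℕ}
    (f g : EuclideanSpace ℝ (Fin m) × EuclideanSpace ℝ (Fin n) → ℝ)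
    (μ ℓf0 ℓf1 ℓg1 ℓg2 : ℝ)
    (hμ : 0 < μ) (hℓf0 : 0 < ℓf0) (hℓf1 : 0 < ℓf1) (hℓg1 : 0 < ℓg1) (hℓg2 : 0 < ℓg2)
    (hf : ContDiff ℝ 1 f) (hg : ContDiff ℝ 2 g)
    (ystar : EuclideanSpace ℝ (Fin m) → EuclideanSpace ℝ (Fin n))
    -- μ-strong convexity of y ↦ g(x,y)
    (hsc : ∀ x, ConvexOn ℝ Set.univ (fun y => g (x, y) - μ / 2 * ‖y‖ ^ 2))
    -- y*(x) is the unique minimizer of y ↦ g(x,y)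
    (hmin : ∀ x y, g (x, ystar x) ≤ g (x, y))
    (huniq : ∀ x y, (∀ z, g (x, y) ≤ g (x, z)) → y = ystar x)
    (hystar : Differentiable ℝ ystar)
    (Φ : EuclideanSpace ℝ (Fin m) → ℝ)
    (hΦ : ∀ x, Φ x = f (x, ystar x))
    -- f is ℓ_{f,0}-Lipschitz in the joint variable
    (hflip : ∀ p q : EuclideanSpace ℝ (Fin m) × EuclideanSpace ℝ (Fin n),
      |f p - f q| ≤ ℓf0 * Real.sqrt (‖p.1 - q.1‖ ^ 2 + ‖p.2 - q.2‖ ^ 2))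
    -- ∇f is ℓ_{f,1}-Lipschitz in the joint variable
    (hgradflip : ∀ p q : EuclideanSpace ℝ (Fin m) × EuclideanSpace ℝ (Fin n),
      Real.sqrt (‖gradx f p - gradx f q‖ ^ 2 + ‖grady f p - grady f q‖ ^ 2)
        ≤ ℓf1 * Real.sqrt (‖p.1 - q.1‖ ^ 2 + ‖p.2 - q.2‖ ^ 2))
    -- ∇g is ℓ_{g,1}-Lipschitz in the joint variable (so ‖∇²_{xy} g‖_op ≤ ℓ_{g,1})
    (hglip : ∀ p q : EuclideanSpace ℝ (Fin m) × EuclideanSpace ℝ (Fin n),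
      Real.sqrt (‖gradx g p - gradx g q‖ ^ 2 + ‖grady g p - grady g q‖ ^ 2)
        ≤ ℓg1 * Real.sqrt (‖p.1 - q.1‖ ^ 2 + ‖p.2 - q.2‖ ^ 2))
    -- ∇²_{xy} g is ℓ_{g,2}-Lipschitz in operator norm
    (hcrosslip : ∀ p q : EuclideanSpace ℝ (Fin m) × EuclideanSpace ℝ (Fin n),
      ‖crossxy g p - crossxy g q‖
        ≤ ℓg2 * Real.sqrt (‖p.1 - q.1‖ ^ 2 + ‖p.2 - q.2‖ ^ 2))
    -- v*(x) = (∇²_{yy} g(x,y*(x)))⁻¹ ∇_y f(x,y*(x))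
    (vstar : EuclideanSpace ℝ (Fin m) → EuclideanSpace ℝ (Fin n))
    (hvstar : ∀ x, vstar x = (hessyy g (x, ystar x)).inverse (grady f (x, ystar x)))
    -- hypergradient formula
    (hgradΦ : ∀ x, gradient Φ x = gradx f (x, ystar x) -
      (ContinuousLinearMap.adjoint (crossxy g (x, ystar x))) (vstar x)) :
    ∀ (x : EuclideanSpace ℝ (Fin m)) (y v : EuclideanSpace ℝ (Fin n)),
      ‖(gradx f (x, y) - (ContinuousLinearMap.adjoint (crossxy g (x, y))) v)
          - gradient Φ x‖
        ≤ (ℓf1 + ℓf0 * ℓg2 / μ) * ‖y - ystar x‖ + ℓg1 * ‖v - vstar x‖ :=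
  statement_8_general f g μ ℓf0 ℓf1 ℓg1 ℓg2 hμ hℓf0 hℓg1 hg ystar hsc Φ hflip hgradflip hglip
    hcrosslip vstar hvstar hgradΦ
end

section
/- Let Φ : ℝ^m → ℝ be differentiable with L-Lipschitz gradient, let α > 0 and let x, h ∈ ℝ^m. Then Φ(x − α h) ≤ Φ(x) − (α/2 − α² L) ‖∇Φ(x)‖² + (α/2 + α² L) ‖∇Φ(x) − h‖². -/
/-!
The descent lemma `Φ (x + v) ≤ Φ x + ⟪∇Φ x, v⟫ + L/2 ‖v‖²` holds because
`t ↦ Φ (x + t v) - t ⟪∇Φ x, v⟫ - L/2 t² ‖v‖²` is antitone on `[0, 1]`: by Cauchy–Schwarz and the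
Lipschitz bound its derivative `⟪∇Φ (x + t v) - ∇Φ x, v⟫ - L t ‖v‖²` is nonpositive. For
`v = -α h` and `g = ∇Φ x`, polarization expresses `⟪g, h⟫` through `‖g‖²`, `‖h‖²`, `‖g - h‖²`, and
`‖h‖² ≤ 2‖g‖² + 2‖g - h‖²` absorbs the quadratic term. Outside the zero space the Lipschitz bound
forces `0 ≤ L`.
-/

open Set

section
variable {F : Type*} [NormedAddCommGroup F] [InnerProductSpace ℝ F] [CompleteSpace F]

theorem hasDerivAt_comp_add_smul {Φ : F → ℝ} {x v : F} {t : ℝ}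
    (hΦ : DifferentiableAt ℝ Φ (x + t • v)) :
    HasDerivAt (fun s : ℝ => Φ (x + s • v)) (inner ℝ (gradient Φ (x + t • v)) v) t := by
  have hline : HasDerivAt (fun s : ℝ => x + s • v) v t := by
    simpa using ((hasDerivAt_id t).smul_const v).const_add x
  rw [inner_gradient_left]
  exact hΦ.hasFDerivAt.comp_hasDerivAt t hline

theorem apply_add_le_of_lipschitz_gradient {Φ : F → ℝ} {L : ℝ}
    (hdiff : Differentiable ℝ Φ)
    (hlip : ∀ u w, ‖gradient Φ u - gradient Φ w‖ ≤ L * ‖u - w‖) (x v : F) :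
    Φ (x + v) ≤ Φ x + inner ℝ (gradient Φ x) v + L / 2 * ‖v‖ ^ 2 := by
  set ψ : ℝ → ℝ := fun t =>
    Φ (x + t • v) - t * inner ℝ (gradient Φ x) v - L / 2 * t ^ 2 * ‖v‖ ^ 2
  have hψ : ∀ t, HasDerivAt ψ
      (inner ℝ (gradient Φ (x + t • v) - gradient Φ x) v - L * t * ‖v‖ ^ 2) t := by
    intro t
    have hline := hasDerivAt_comp_add_smul (x := x) (v := v) (hdiff (x + t • v))
    have hlinear := (hasDerivAt_id t).mul_const (inner ℝ (gradient Φ x) v)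
    have hquad := ((hasDerivAt_pow 2 t).const_mul (L / 2)).mul_const (‖v‖ ^ 2)
    refine ((hline.sub hlinear).sub hquad).congr_deriv ?_
    rw [inner_sub_left]; ring
  have hψ_nonpos : ∀ t ∈ interior (Icc (0 : ℝ) 1),
      inner ℝ (gradient Φ (x + t • v) - gradient Φ x) v - L * t * ‖v‖ ^ 2 ≤ 0 := by
    intro t ht
    rw [interior_Icc] at ht
    have hgrad : ‖gradient Φ (x + t • v) - gradient Φ x‖ ≤ L * t * ‖v‖ := by
      simpa [norm_smul, abs_of_pos ht.1, mul_assoc] using hlip (x + t • v) x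
    rw [sub_nonpos]
    calc inner ℝ (gradient Φ (x + t • v) - gradient Φ x) v
        ≤ ‖gradient Φ (x + t • v) - gradient Φ x‖ * ‖v‖ := real_inner_le_norm _ _
      _ ≤ L * t * ‖v‖ * ‖v‖ := mul_le_mul_of_nonneg_right hgrad (norm_nonneg v)
      _ = L * t * ‖v‖ ^ 2 := by ring
  have hanti : AntitoneOn ψ (Icc 0 1) :=
    antitoneOn_of_hasDerivWithinAt_nonpos (convex_Icc 0 1)
      (fun t _ => (hψ t).continuousAt.continuousWithinAt)
      (fun t _ => (hψ t).hasDerivWithinAt) hψ_nonpos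
  have hψ_le := hanti (left_mem_Icc.2 zero_le_one) (right_mem_Icc.2 zero_le_one) zero_le_one
  simp only [ψ, zero_smul, one_smul, add_zero] at hψ_le
  linarith

theorem apply_sub_smul_le_of_lipschitz_gradient {Φ : F → ℝ} {L α : ℝ}
    (hdiff : Differentiable ℝ Φ) (hlip : ∀ u w, ‖gradient Φ u - gradient Φ w‖ ≤ L * ‖u - w‖)
    (hL : 0 ≤ L) (hα : 0 ≤ α) (x h : F) :
    Φ (x - α • h) ≤ Φ x - (α / 2 - α ^ 2 * L) * ‖gradient Φ x‖ ^ 2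
      + (α / 2 + α ^ 2 * L) * ‖gradient Φ x - h‖ ^ 2 := by
  have hdescent := apply_add_le_of_lipschitz_gradient hdiff hlip x (-(α • h))
  rw [← sub_eq_add_neg, inner_neg_right, real_inner_smul_right, norm_neg, norm_smul,
    Real.norm_of_nonneg hα] at hdescent
  set g := gradient Φ x
  have hpolar : 2 * inner ℝ g h = ‖g‖ ^ 2 + ‖h‖ ^ 2 - ‖g - h‖ ^ 2 := by
    rw [norm_sub_sq_real]; ring
  have hnorm_h : ‖h‖ ^ 2 ≤ 2 * ‖g‖ ^ 2 + 2 * ‖g - h‖ ^ 2 := by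
    have htri : ‖h‖ ≤ ‖g‖ + ‖g - h‖ := by simpa using norm_sub_le g (g - h)
    nlinarith [norm_nonneg h, sq_nonneg (‖g‖ - ‖g - h‖)]
  nlinarith [mul_le_mul_of_nonneg_left hnorm_h (mul_nonneg hL (sq_nonneg α)),
    mul_nonneg hα (sq_nonneg ‖h‖)]

end

theorem nonneg_of_forall_norm_sub_le_mul {E G : Type*} [NormedAddCommGroup E] [Nontrivial E]
    [SeminormedAddCommGroup G] {f : E → G} {L : ℝ} (hf : ∀ u w, ‖f u - f w‖ ≤ L * ‖u - w‖) :
    0 ≤ L := by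
  obtain ⟨u, hu⟩ := exists_ne (0 : E)
  have := (norm_nonneg _).trans (hf u 0)
  rw [sub_zero] at this
  exact nonneg_of_mul_nonneg_left this (norm_pos_iff.2 hu)

/-- one-step descent inequality for a gradient step with an inexact
gradient direction h:
Φ(x − αh) ≤ Φ(x) − (α/2 − α²L)‖∇Φ(x)‖² + (α/2 + α²L)‖∇Φ(x) − h‖². -/
theorem statement_9 {m : ℕ} (Φ : EuclideanSpace ℝ (Fin m) → ℝ) (L α : ℝ)
    (hdiff : Differentiable ℝ Φ)
    (hlip : ∀ u w, ‖gradient Φ u - gradient Φ w‖ ≤ L * ‖u - w‖)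
    (hα : 0 < α) (x h : EuclideanSpace ℝ (Fin m)) :
    Φ (x - α • h) ≤ Φ x - (α / 2 - α ^ 2 * L) * ‖gradient Φ x‖ ^ 2
      + (α / 2 + α ^ 2 * L) * ‖gradient Φ x - h‖ ^ 2 := by
  rcases subsingleton_or_nontrivial (EuclideanSpace ℝ (Fin m)) with hE | hE
  · rw [Subsingleton.elim (x - α • h) x, Subsingleton.elim (gradient Φ x) 0, zero_sub,
      Subsingleton.elim h 0]
    simp
  · exact apply_sub_smul_le_of_lipschitz_gradient hdiff hlip
      (nonneg_of_forall_norm_sub_le_mul hlip) hα.le x h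
end

section
/- Let Φ : ℝ^m → ℝ be differentiable and bounded below, with L-Lipschitz gradient (L > 0). Let Δ₀ ≥ 0, Ω ≥ 0, 0 ≤ δ ≤ 1, set α = 1/(8L), and suppose Ω (1 + 2 α L) δ ≤ 1/4. Let (x^k)_{k≥0} and (h^k)_{k≥0} satisfy x^{k+1} = x^k − α h^k and ‖h^k − ∇Φ(x^k)‖² ≤ δ [ (1/2)^k Δ₀ + Ω Σ_{j=0}^{k−1} (1/2)^{k−1−j} ‖∇Φ(x^j)‖² ] for every k ≥ 0. Then for every K ≥ 1, (1/K) Σ_{k=0}^{K−1} ‖∇Φ(x^k)‖² ≤ ( 64 L (Φ(x^0) − inf_x Φ(x)) + 5 Δ₀ ) / K. -/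
/-!
An inexact gradient step with `α L ≤ 1` decreases `Φ` by `α/2 ‖∇Φ‖²` up to `α/2` times the
squared error (descent lemma). Summing over `K` steps, the geometric error bound contributes at
most `2δΔ₀ + 2δΩ ∑ ‖∇Φ(xᵏ)‖²`, and `δΩ ≤ 1/5` lets the gradient part be absorbed on the left.
-/

open RealInnerProductSpace Finset

section GradientLipschitz

variable {E : Type*} [NormedAddCommGroup E] [InnerProductSpace ℝ E] [CompleteSpace E]

theorem hasDerivAt_apply_add_smul {f : E → ℝ} {x d : E} {t : ℝ}
    (hf : DifferentiableAt ℝ f (x + t • d)) :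
    HasDerivAt (fun s : ℝ => f (x + s • d)) ⟪gradient f (x + t • d), d⟫ t := by
  have hline : HasDerivAt (fun s : ℝ => x + s • d) d t := by
    simpa using ((hasDerivAt_id t).smul_const d).const_add x
  simpa [Function.comp_def] using hf.hasGradientAt.hasFDerivAt.comp_hasDerivAt t hline

variable {f : E → ℝ} {L : ℝ}

theorem apply_add_le_of_gradient_lipschitz (hf : Differentiable ℝ f)
    (hlip : ∀ u w, ‖gradient f u - gradient f w‖ ≤ L * ‖u - w‖) (x d : E) :
    f (x + d) ≤ f x + ⟪gradient f x, d⟫ + L / 2 * ‖d‖ ^ 2 := by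
  -- `G' ≤ 0` on `[0, 1]` by the Lipschitz bound, and `G 1 ≤ G 0` is the claim.
  set G : ℝ → ℝ := fun t => f (x + t • d) - t * ⟪gradient f x, d⟫ - L / 2 * t ^ 2 * ‖d‖ ^ 2
    with hG_def
  have hG : ∀ t, HasDerivAt G
      (⟪gradient f (x + t • d) - gradient f x, d⟫ - L * t * ‖d‖ ^ 2) t := by
    intro t
    refine (((hasDerivAt_apply_add_smul (hf _)).sub ((hasDerivAt_id t).mul_const _)).sub
      (((hasDerivAt_pow 2 t).const_mul (L / 2)).mul_const (‖d‖ ^ 2))).congr_deriv ?_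
    rw [inner_sub_left]
    simp only [Nat.cast_ofNat, one_mul]
    ring
  have hinner_le : ∀ t, 0 ≤ t →
      ⟪gradient f (x + t • d) - gradient f x, d⟫ ≤ L * t * ‖d‖ ^ 2 := fun t ht =>
    calc ⟪gradient f (x + t • d) - gradient f x, d⟫
        ≤ ‖gradient f (x + t • d) - gradient f x‖ * ‖d‖ := real_inner_le_norm _ _
      _ ≤ L * ‖t • d‖ * ‖d‖ := by gcongr; simpa using hlip (x + t • d) x
      _ = L * t * ‖d‖ ^ 2 := by rw [norm_smul, Real.norm_of_nonneg ht]; ring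
  have hanti : AntitoneOn G (Set.Icc 0 1) :=
    antitoneOn_of_deriv_nonpos (convex_Icc 0 1)
      (fun t _ => (hG t).continuousAt.continuousWithinAt)
      (fun t _ => (hG t).differentiableAt.differentiableWithinAt)
      (fun t ht => by
        rw [interior_Icc] at ht
        rw [(hG t).deriv]
        linarith [hinner_le t ht.1.le])
  have hG01 :=
    hanti (Set.left_mem_Icc.2 zero_le_one) (Set.right_mem_Icc.2 zero_le_one) zero_le_one
  simp only [hG_def, one_smul, zero_smul, add_zero, one_mul, one_pow, zero_mul, sub_zero,
    ne_eq, OfNat.ofNat_ne_zero, not_false_eq_true, zero_pow, mul_zero] at hG01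
  linarith

theorem apply_sub_smul_le_of_gradient_lipschitz (hf : Differentiable ℝ f)
    (hlip : ∀ u w, ‖gradient f u - gradient f w‖ ≤ L * ‖u - w‖) {α : ℝ} (hα : 0 ≤ α)
    (hαL : α * L ≤ 1) (x h : E) :
    f (x - α • h) ≤ f x - α / 2 * ‖gradient f x‖ ^ 2 + α / 2 * ‖h - gradient f x‖ ^ 2 := by
  have hdesc := apply_add_le_of_gradient_lipschitz hf hlip x (-(α • h))
  rw [← sub_eq_add_neg, inner_neg_right, real_inner_smul_right, norm_neg, norm_smul,
    Real.norm_of_nonneg hα] at hdesc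
  have hstep : L / 2 * (α * ‖h‖) ^ 2 ≤ α / 2 * ‖h‖ ^ 2 := by
    have := mul_le_mul_of_nonneg_left hαL (mul_nonneg hα (sq_nonneg ‖h‖))
    linarith
  rw [norm_sub_sq_real, real_inner_comm]
  linarith

theorem sum_sq_norm_gradient_le (hf : Differentiable ℝ f)
    (hlip : ∀ u w, ‖gradient f u - gradient f w‖ ≤ L * ‖u - w‖) {α : ℝ} (hα : 0 ≤ α)
    (hαL : α * L ≤ 1) (x h : ℕ → E) (hx : ∀ k, x (k + 1) = x k - α • h k) (K : ℕ) :
    α / 2 * ∑ k ∈ range K, ‖gradient f (x k)‖ ^ 2 ≤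
      f (x 0) - f (x K) + α / 2 * ∑ k ∈ range K, ‖h k - gradient f (x k)‖ ^ 2 := by
  induction K with
  | zero => simp
  | succ K ih =>
    have := apply_sub_smul_le_of_gradient_lipschitz hf hlip hα hαL (x K) (h K)
    rw [← hx] at this
    simp only [sum_range_succ, mul_add]
    linarith

end GradientLipschitz

theorem one_sub_mul_sum_sum_pow_mul_le {r : ℝ} (hr : 0 ≤ r) {c : ℕ → ℝ} (hc : ∀ k, 0 ≤ c k)
    (K : ℕ) :
    (1 - r) * ∑ k ∈ range K, ∑ j ∈ range k, r ^ (k - 1 - j) * c j ≤ ∑ k ∈ range K, c k := by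
  set D : ℕ → ℝ := fun k => ∑ j ∈ range k, r ^ (k - 1 - j) * c j with hD
  have hD_succ : ∀ k, D (k + 1) = c k + r * D k := by
    intro k
    simp only [hD, sum_range_succ, Nat.add_sub_cancel, Nat.sub_self, pow_zero, one_mul, mul_sum]
    rw [add_comm]
    congr 1
    refine sum_congr rfl fun j hj => ?_
    rw [show k - j = k - 1 - j + 1 by have := mem_range.1 hj; omega, pow_succ]
    ring
  have hexact : ∀ K, (1 - r) * ∑ k ∈ range K, D k + D K = ∑ k ∈ range K, c k := by
    intro K
    induction K with
    | zero => simp [hD]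
    | succ K ih => rw [sum_range_succ, sum_range_succ, hD_succ, ← ih]; ring
  have hD_nonneg : 0 ≤ D K := sum_nonneg fun j _ => mul_nonneg (pow_nonneg hr _) (hc j)
  linarith [hexact K]

theorem one_sub_mul_sum_le_of_le_geometric {r δ Δ₀ Ω : ℝ} (hr0 : 0 ≤ r) (hr1 : r ≤ 1)
    (hδ : 0 ≤ δ) (hΔ₀ : 0 ≤ Δ₀) (hΩ : 0 ≤ Ω) {e c : ℕ → ℝ} (hc : ∀ k, 0 ≤ c k)
    (he : ∀ k, e k ≤ δ * (r ^ k * Δ₀ + Ω * ∑ j ∈ range k, r ^ (k - 1 - j) * c j)) (K : ℕ) :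
    (1 - r) * ∑ k ∈ range K, e k ≤ δ * Δ₀ + δ * Ω * ∑ k ∈ range K, c k := by
  have hgeom : (1 - r) * ∑ k ∈ range K, r ^ k ≤ 1 := by
    rw [mul_neg_geom_sum]
    linarith [pow_nonneg hr0 K]
  have hconv := one_sub_mul_sum_sum_pow_mul_le hr0 hc K
  have hsum : ∑ k ∈ range K, e k ≤
      δ * Δ₀ * ∑ k ∈ range K, r ^ k + δ * Ω * ∑ k ∈ range K, ∑ j ∈ range k, r ^ (k - 1 - j) * c j :=
    calc ∑ k ∈ range K, e k
        ≤ ∑ k ∈ range K, δ * (r ^ k * Δ₀ + Ω * ∑ j ∈ range k, r ^ (k - 1 - j) * c j) :=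
          sum_le_sum fun k _ => he k
      _ = _ := by
          rw [mul_sum, mul_sum, ← sum_add_distrib]
          exact sum_congr rfl fun k _ => by ring
  nlinarith [mul_le_mul_of_nonneg_left hsum (sub_nonneg.2 hr1),
    mul_le_mul_of_nonneg_left hgeom (mul_nonneg hδ hΔ₀),
    mul_le_mul_of_nonneg_left hconv (mul_nonneg hδ hΩ)]

/-- abstract Euclidean form of the deterministic convergence
theorem for RieBO: with α = 1/(8L), geometric-decay hypergradient error with
parameters δ, Ω, Δ₀ and Ω(1 + 2αL)δ ≤ 1/4, the average squared gradient norm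
satisfies (1/K) Σ ‖∇Φ(x^k)‖² ≤ (64L(Φ(x⁰) − inf Φ) + 5Δ₀)/K. -/
theorem statement_17 {m : ℕ} (Φ : EuclideanSpace ℝ (Fin m) → ℝ)
    (L α δ Δ₀ Ω : ℝ) (hL : 0 < L)
    (hdiff : Differentiable ℝ Φ)
    (hbdd : BddBelow (Set.range Φ))
    (hlip : ∀ u w, ‖gradient Φ u - gradient Φ w‖ ≤ L * ‖u - w‖)
    (hΔ₀ : 0 ≤ Δ₀) (hΩ : 0 ≤ Ω) (hδ0 : 0 ≤ δ) (hδ1 : δ ≤ 1)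
    (hα : α = 1 / (8 * L))
    (hΩδ : Ω * (1 + 2 * α * L) * δ ≤ 1 / 4)
    (x h : ℕ → EuclideanSpace ℝ (Fin m))
    (hx : ∀ k, x (k + 1) = x k - α • h k)
    (herr : ∀ k, ‖h k - gradient Φ (x k)‖ ^ 2 ≤
      δ * ((1 / 2 : ℝ) ^ k * Δ₀
        + Ω * ∑ j ∈ Finset.range k, (1 / 2 : ℝ) ^ (k - 1 - j) * ‖gradient Φ (x j)‖ ^ 2)) :
    ∀ K : ℕ, 1 ≤ K →
      (1 / (K : ℝ)) * ∑ k ∈ Finset.range K, ‖gradient Φ (x k)‖ ^ 2 ≤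
        (64 * L * (Φ (x 0) - ⨅ z, Φ z) + 5 * Δ₀) / K := by
  intro K _
  have hα0 : 0 ≤ α := by rw [hα]; positivity
  have hαL : α * L = 1 / 8 := by rw [hα]; field_simp
  have hδΩ : δ * Ω ≤ 1 / 5 := by
    rw [mul_assoc 2, hαL] at hΩδ
    linarith [show Ω * (1 + 2 * (1 / 8)) * δ = 5 / 4 * (δ * Ω) by ring]
  set S := ∑ k ∈ range K, ‖gradient Φ (x k)‖ ^ 2
  set E := ∑ k ∈ range K, ‖h k - gradient Φ (x k)‖ ^ 2
  have hdesc : α / 2 * S ≤ Φ (x 0) - Φ (x K) + α / 2 * E :=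
    sum_sq_norm_gradient_le hdiff hlip hα0 (by rw [hαL]; norm_num) x h hx K
  have hE : (1 - 1 / 2) * E ≤ δ * Δ₀ + δ * Ω * S :=
    one_sub_mul_sum_le_of_le_geometric (by norm_num) (by norm_num) hδ0 hΔ₀ hΩ
      (fun _ => sq_nonneg _) herr K
  have hS0 : 0 ≤ S := sum_nonneg fun k _ => sq_nonneg _
  have hgap : 0 ≤ Φ (x K) - ⨅ z, Φ z := sub_nonneg.2 (ciInf_le hbdd _)
  have hgap₀ : 0 ≤ Φ (x 0) - ⨅ z, Φ z := sub_nonneg.2 (ciInf_le hbdd _)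
  have hS_le : S ≤ 16 * L * (Φ (x 0) - Φ (x K)) + E :=
    calc S = 16 * L * (α / 2 * S) := by linear_combination (-8 * S) * hαL
      _ ≤ 16 * L * (Φ (x 0) - Φ (x K) + α / 2 * E) := by gcongr
      _ = 16 * L * (Φ (x 0) - Φ (x K)) + E := by linear_combination (8 * E) * hαL
  have hS : S ≤ 64 * L * (Φ (x 0) - ⨅ z, Φ z) + 5 * Δ₀ := by
    linarith [mul_le_mul_of_nonneg_right hδΩ hS0, mul_le_mul_of_nonneg_right hδ1 hΔ₀,
      mul_nonneg hL.le hgap, mul_nonneg hL.le hgap₀]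
  rw [one_div_mul_eq_div]
  exact div_le_div_of_nonneg_right hS (Nat.cast_nonneg K)
end
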